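/- arXiv:1309.0158 — 2 statements merged into one kernel-verified Lean document; each statement's English description precedes it below -/
import Mathlib

section
/- For a positive integer m, let 𝒱 := {−m, …, −1, 0, 1, …, m} and let P be the stochastic matrix with P_{uv} = 1/m if u ≠ v and u·v ≥ 0 with u ≠ 0, P_{uv} = 0 if u·v < 0 or u = v ≠ 0 (and P_{uu} = 0 for all u), and P_{0v} = 1/(2m) for all v ≠ 0. For 0 < α < 1/2, let P̃ coincide with P outside row 0, with P̃_{00} = 0 and P̃_{0v} = (1/2 + α·sgn(v))/m for v ≠ 0. Then: (i) the unique invariant probability vector of P is π_0 = 1/(m+1), π_v = 1/(2m+2) for v ≠ 0; (ii) the unique invariant probability vector π̃ of P̃ satisfies π̃_v − π_v = α·sgn(v)/(m+1) for all v ∈ 𝒱; and (iii) ‖π̃ − π‖ = m·α/(m+1). -/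
open scoped Classical BigOperators
open Finset

variable {V : Type*}

/-- A (row-)stochastic matrix: nonnegative entries, rows summing to one. -/
def IsStochastic [Fintype V] (P : Matrix V V ℝ) : Prop :=
  (∀ u v, 0 ≤ P u v) ∧ ∀ u, ∑ v, P u v = 1

/-- Irreducibility: the digraph with an edge `(u,v)` whenever `P u v > 0`
is strongly connected. -/
def IrreducibleMatrix [Fintype V] (P : Matrix V V ℝ) : Prop :=
  ∀ u v : V, Relation.ReflTransGen (fun a b => 0 < P a b) u v

/-- `p` is an invariant probability (row) vector of `P`. -/
def InvariantProb [Fintype V] (P : Matrix V V ℝ) (p : V → ℝ) : Prop :=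
  (∀ v, 0 ≤ p v) ∧ (∑ v, p v = 1) ∧ ∀ v, ∑ u, p u * P u v = p v

/-- Total variation distance. -/
noncomputable def tvDist [Fintype V] (mu p : V → ℝ) : ℝ :=
  (1 / 2) * ∑ v, |mu v - p v|

/-- The smallest positive solution of `x * log (e^2 / x) = 1`. -/
noncomputable def xstar : ℝ :=
  sInf {x : ℝ | 0 < x ∧ x * Real.log (Real.exp 2 / x) = 1}

/-- The function `Ψ`: `Ψ(x) = x log(e²/x)` for `x ≤ x*`, and `1` for `x > x*`
(note `Ψ(0) = 0` since `Real.log (e²/0) = Real.log 0 = 0`). -/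
noncomputable def Psi (x : ℝ) : ℝ :=
  if x ≤ xstar then x * Real.log (Real.exp 2 / x) else 1

open Fin.NatCast

/-- `phi P W w k` is the probability that a chain with transition matrix `P`
started at `w` exits `W` exactly at time `k`: the sum over `(k+1)`-tuples
`ξ` with `ξ 0 = w`, `ξ l ∈ W` for `0 < l < k`, `ξ k ∉ W`, of `∏ P (ξ (l-1)) (ξ l)`. -/
noncomputable def phi [Fintype V] (P : Matrix V V ℝ) (W : Finset V) (w : V) (k : ℕ) : ℝ :=
  ∑ ξ ∈ Finset.univ.filter (fun ξ : Fin (k + 1) → V =>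
      ξ 0 = w ∧ (∀ l : ℕ, 0 < l → l < k → ξ l ∈ W) ∧ ξ k ∉ W),
    ∏ l ∈ Finset.range k, P (ξ l) (ξ (l + 1))

/-- `(1/t) * min_{w ∈ W, p w > 0} ∑_{k=1}^t phi w k` (the minimum over an empty
index set is taken to be `1`). -/
noncomputable def exitProbAux [Fintype V] (P : Matrix V V ℝ) (p : V → ℝ) (W : Finset V)
    (t : ℕ) : ℝ :=
  if h : (W.filter fun w => 0 < p w).Nonempty then
    (W.filter fun w => 0 < p w).inf' h
      (fun w => (1 / (t : ℝ)) * ∑ k ∈ Finset.Icc 1 t, phi P W w k)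
  else 1

/-- The exit probability from `W`:
`sup_{t ≥ 1} min_{w ∈ W, p w > 0} (1/t) ∑_{k=1}^t phi w k`. -/
noncomputable def exitProb [Fintype V] (P : Matrix V V ℝ) (p : V → ℝ) (W : Finset V) : ℝ :=
  sSup {x : ℝ | ∃ t : ℕ, 1 ≤ t ∧ x = exitProbAux P p W t}

/-- The entrance time `τ*_W := min_{u ∉ W} τ^u`. -/
noncomputable def entranceTime (tau : V → ℝ) (W : Finset V) : ℝ :=
  sInf {x : ℝ | ∃ u, u ∉ W ∧ x = tau u}

/-!
For `v ≠ 0` of sign `ε`, invariance at `v` reads `(m + 1) π v = w ε · π 0 + π (side ε)`, where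
`w ε` is the total probability of jumping from `0` into the side of sign `ε`. The right-hand side
does not depend on `v`, so `π` is constant on each side, and summing over the `m` sites of the side
gives `π v = w ε · π 0`; normalisation then forces `π 0 = 1 / (m + 1)`. Both `P` (`w ≡ 1/2`) and
`P̃` (`w ε = 1/2 + α ε`) are of this form.
-/

theorem Finset.eq_of_card_add_one_mul_eq_add_sum {ι : Type*} {s : Finset ι} {f : ι → ℝ}
    {c : ℝ} (h : ∀ v ∈ s, (#s + 1 : ℝ) * f v = c + ∑ u ∈ s, f u) : ∀ v ∈ s, f v = c := by
  have hsum : (#s + 1 : ℝ) * ∑ u ∈ s, f u = #s * (c + ∑ u ∈ s, f u) := by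
    rw [mul_sum, sum_congr rfl h, sum_const, nsmul_eq_mul]
  intro v hv
  have : (#s + 1 : ℝ) * (f v - c) = 0 := by linear_combination h v hv + hsum
  simpa [sub_eq_zero, Nat.cast_add_one_ne_zero] using this

theorem Int.sign_eq_one_or_eq_neg_one {a : ℤ} (ha : a ≠ 0) : a.sign = 1 ∨ a.sign = -1 := by
  rcases a.sign_trichotomy with h | h | h
  · exact Or.inl h
  · exact absurd (Int.sign_eq_zero_iff_zero.mp h) ha
  · exact Or.inr h

theorem Int.mul_pos_of_sign_eq {a b : ℤ} (h : a.sign = b.sign) (hb : b ≠ 0) : 0 < a * b := by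
  rcases hb.lt_or_gt with hb | hb
  · exact mul_pos_of_neg_of_neg
      (Int.sign_eq_neg_one_iff_neg.mp (h.trans (Int.sign_eq_neg_one_of_neg hb))) hb
  · exact mul_pos (Int.sign_eq_one_iff_pos.mp (h.trans (Int.sign_eq_one_of_pos hb))) hb

theorem Int.mul_neg_of_sign_eq_neg {a b : ℤ} (h : a.sign = -b.sign) (hb : b ≠ 0) : a * b < 0 := by
  have := Int.mul_pos_of_sign_eq (a := -a) (b := b) (by rw [Int.sign_neg, h, neg_neg]) hb
  linarith [neg_mul a b]

noncomputable section

namespace GluedCompleteGraphs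

abbrev Sites (m : ℕ) := {x : ℤ // x ∈ Finset.Icc (-(m : ℤ)) (m : ℤ)}

def origin (m : ℕ) : Sites m := ⟨0, by simp⟩

def side (m : ℕ) (ε : ℤ) : Finset (Sites m) := univ.filter fun v => v.val.sign = ε

/-- Two complete graphs on `{0, …, m}` and `{-m, …, 0}` glued at `0`; from `0` the walk enters
the side of sign `ε` with total probability `w ε`, so `P` is `w ≡ 1/2` and `P̃` is
`w ε = 1/2 + α ε`. -/
def matrix (m : ℕ) (w : ℤ → ℝ) : Matrix (Sites m) (Sites m) ℝ := fun u v =>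
  if u.val = 0 then (if v.val = 0 then 0 else w v.val.sign / m)
  else if u.val ≠ v.val ∧ 0 ≤ u.val * v.val then 1 / m else 0

def stationary (m : ℕ) (w : ℤ → ℝ) (v : Sites m) : ℝ :=
  (if v.val = 0 then 1 else w v.val.sign) / (m + 1)

variable {m : ℕ}

theorem card_side {ε : ℤ} (hε : ε = 1 ∨ ε = -1) : #(side m ε) = m := by
  have key : #(side m ε) = #((Icc (-(m : ℤ)) m).filter fun x => x.sign = ε) := by
    simp only [side, card_filter]
    exact sum_coe_sort (Icc (-(m : ℤ)) m) fun x => if x.sign = ε then 1 else 0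
  rw [key]
  rcases hε with rfl | rfl
  · rw [show (Icc (-(m : ℤ)) m).filter (fun x => x.sign = 1) = Icc (1 : ℤ) m by
      ext x; simp only [mem_filter, mem_Icc, Int.sign_eq_one_iff_pos]; omega]
    simp
  · rw [show (Icc (-(m : ℤ)) m).filter (fun x => x.sign = -1) = Icc (-(m : ℤ)) (-1) by
      ext x; simp only [mem_filter, mem_Icc, Int.sign_eq_neg_one_iff_neg]; omega]
    simp

theorem mem_side {ε : ℤ} {v : Sites m} : v ∈ side m ε ↔ v.val.sign = ε := by
  simp [side]

theorem val_ne_zero_of_mem_side {ε : ℤ} (hε : ε ≠ 0) {v : Sites m} (hv : v ∈ side m ε) :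
    v.val ≠ 0 := fun h => hε (by rw [← mem_side.mp hv, h, Int.sign_zero])

theorem side_zero : side m 0 = {origin m} := by
  ext v
  simp only [side, mem_filter, mem_univ, true_and, Int.sign_eq_zero_iff_zero, mem_singleton,
    origin, Subtype.ext_iff]

theorem sum_univ_eq_add_sum_side_add_sum_side {ε : ℤ} (hε : ε = 1 ∨ ε = -1) (f : Sites m → ℝ) :
    ∑ v, f v = f (origin m) + ∑ v ∈ side m ε, f v + ∑ v ∈ side m (-ε), f v := by
  have hmaps : ∀ v ∈ (univ : Finset (Sites m)), v.val.sign ∈ ({0, ε, -ε} : Finset ℤ) := by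
    rcases hε with rfl | rfl <;> intro v _ <;> rcases Int.sign_trichotomy v.val with h | h | h <;>
      simp [h]
  rw [← sum_fiberwise_of_maps_to hmaps]
  change ∑ j ∈ _, ∑ v ∈ side m j, f v = _
  rw [sum_insert (by simp; omega), sum_pair (by omega), side_zero, sum_singleton, add_assoc]

theorem sum_abs_sign : ∑ v : Sites m, |(v.val.sign : ℝ)| = 2 * m := by
  have on_side : ∀ ε, ε = 1 ∨ ε = -1 → ∑ v ∈ side m ε, |(v.val.sign : ℝ)| = m := by
    intro ε hε
    have : ∀ v ∈ side m ε, |(v.val.sign : ℝ)| = 1 := by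
      intro v hv
      rcases hε with rfl | rfl <;> simp [mem_side.mp hv]
    rw [sum_congr rfl this, sum_const, card_side hε, nsmul_one]
  rw [sum_univ_eq_add_sum_side_add_sum_side (Or.inl rfl), on_side 1 (Or.inl rfl),
    on_side (-1) (Or.inr rfl)]
  simp only [origin, Int.sign_zero, Int.cast_zero, abs_zero, zero_add]
  ring

variable (w : ℤ → ℝ)

theorem matrix_origin_left {v : Sites m} (hv : v.val ≠ 0) :
    matrix m w (origin m) v = w v.val.sign / m := by
  simp [matrix, origin, hv]

theorem matrix_origin_origin : matrix m w (origin m) (origin m) = 0 := by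
  simp [matrix, origin]

theorem matrix_origin_right {u : Sites m} (hu : u.val ≠ 0) : matrix m w u (origin m) = 1 / m := by
  simp [matrix, origin, hu]

theorem matrix_of_mul_pos {u v : Sites m} (h : 0 < u.val * v.val) :
    matrix m w u v = if u = v then 0 else (1 / m : ℝ) := by
  have hu : u.val ≠ 0 := by rintro h0; simp [h0] at h
  by_cases huv : u = v
  · subst huv
    simp [matrix, hu]
  · simp [matrix, hu, huv, h.le]

theorem matrix_of_mul_neg {u v : Sites m} (h : u.val * v.val < 0) : matrix m w u v = 0 := by
  have hu : u.val ≠ 0 := by rintro h0; simp [h0] at h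
  simp [matrix, hu, h]

theorem sum_mul_matrix_of_ne_zero (p : Sites m → ℝ) {v : Sites m} (hv : v.val ≠ 0) :
    ∑ u, p u * matrix m w u v =
      (w v.val.sign * p (origin m) + ∑ u ∈ side m v.val.sign, p u - p v) / m := by
  have same : ∀ u ∈ side m v.val.sign,
      p u * matrix m w u v = p u / m - if u = v then p u / m else 0 := by
    intro u hu
    rw [matrix_of_mul_pos w (Int.mul_pos_of_sign_eq (mem_side.mp hu) hv)]
    split_ifs <;> ring
  have opp : ∀ u ∈ side m (-v.val.sign), p u * matrix m w u v = 0 := by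
    intro u hu
    rw [matrix_of_mul_neg w (Int.mul_neg_of_sign_eq_neg (mem_side.mp hu) hv), mul_zero]
  rw [sum_univ_eq_add_sum_side_add_sum_side (Int.sign_eq_one_or_eq_neg_one hv),
    matrix_origin_left w hv, sum_congr rfl same, sum_congr rfl opp, sum_sub_distrib,
    sum_ite_eq', if_pos (mem_side.mpr rfl), ← sum_div, sum_const_zero]
  ring

theorem sum_mul_matrix_origin (p : Sites m → ℝ) :
    ∑ u, p u * matrix m w u (origin m) =
      (∑ u ∈ side m 1, p u + ∑ u ∈ side m (-1), p u) / m := by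
  have off_origin : ∀ ε ≠ 0, ∀ u ∈ side m ε, p u * matrix m w u (origin m) = p u / m := by
    intro ε hε u hu
    rw [matrix_origin_right w (val_ne_zero_of_mem_side hε hu), mul_one_div]
  rw [sum_univ_eq_add_sum_side_add_sum_side (Or.inl rfl), matrix_origin_origin,
    sum_congr rfl (off_origin 1 one_ne_zero), sum_congr rfl (off_origin (-1) (by norm_num)),
    ← sum_div, ← sum_div]
  ring

theorem eq_stationary_of_invariantProb (hm : m ≠ 0) (hw : w 1 + w (-1) = 1)
    {p : Sites m → ℝ} (hp : InvariantProb (matrix m w) p) : p = stationary m w := by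
  have hm' : (m : ℝ) ≠ 0 := Nat.cast_ne_zero.mpr hm
  have const_on_side : ∀ ε, ε = 1 ∨ ε = -1 → ∀ v ∈ side m ε, p v = w ε * p (origin m) := by
    intro ε hε
    apply eq_of_card_add_one_mul_eq_add_sum
    intro v hv
    have hv0 := val_ne_zero_of_mem_side (by omega) hv
    have inv := hp.2.2 v
    rw [sum_mul_matrix_of_ne_zero w p hv0, mem_side.mp hv, div_eq_iff hm'] at inv
    rw [card_side hε]
    linarith
  have mass_side : ∀ ε, ε = 1 ∨ ε = -1 → ∑ v ∈ side m ε, p v = m * (w ε * p (origin m)) := by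
    intro ε hε
    rw [sum_congr rfl (const_on_side ε hε), sum_const, card_side hε, nsmul_eq_mul]
  have at_origin : p (origin m) * (m + 1) = 1 := by
    have total := hp.2.1
    rw [sum_univ_eq_add_sum_side_add_sum_side (Or.inl rfl), mass_side 1 (Or.inl rfl),
      mass_side (-1) (Or.inr rfl)] at total
    linear_combination total - m * p (origin m) * hw
  funext v
  rw [stationary, eq_div_iff (by positivity)]
  by_cases hv : v.val = 0
  · obtain rfl : v = origin m := Subtype.ext hv
    rw [if_pos hv, at_origin]
  · have hε := Int.sign_eq_one_or_eq_neg_one hv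
    rw [if_neg hv, const_on_side _ hε v (mem_side.mpr rfl)]
    linear_combination w v.val.sign * at_origin

theorem invariantProb_stationary (hm : m ≠ 0) (hw : w 1 + w (-1) = 1) (hw₁ : 0 ≤ w 1)
    (hw₂ : 0 ≤ w (-1)) : InvariantProb (matrix m w) (stationary m w) := by
  have hm' : (m : ℝ) ≠ 0 := Nat.cast_ne_zero.mpr hm
  have mass_side : ∀ ε, ε = 1 ∨ ε = -1 →
      ∑ v ∈ side m ε, stationary m w v = m * (w ε / (m + 1)) := by
    intro ε hε
    have : ∀ v ∈ side m ε, stationary m w v = w ε / (m + 1) := by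
      intro v hv
      rw [stationary, if_neg (val_ne_zero_of_mem_side (by omega) hv), mem_side.mp hv]
    rw [sum_congr rfl this, sum_const, card_side hε, nsmul_eq_mul]
  have at_origin : stationary m w (origin m) = 1 / (m + 1) := by simp [stationary, origin]
  refine ⟨fun v => ?_, ?_, fun v => ?_⟩
  · unfold stationary
    split_ifs with hv
    · positivity
    · rcases Int.sign_eq_one_or_eq_neg_one hv with h | h <;> rw [h] <;> positivity
  · rw [sum_univ_eq_add_sum_side_add_sum_side (Or.inl rfl), mass_side 1 (Or.inl rfl),
      mass_side (-1) (Or.inr rfl), at_origin]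
    field_simp
    linear_combination m * hw
  · by_cases hv : v.val = 0
    · obtain rfl : v = origin m := Subtype.ext hv
      rw [sum_mul_matrix_origin, mass_side 1 (Or.inl rfl), mass_side (-1) (Or.inr rfl),
        at_origin]
      field_simp
      linear_combination hw
    · have hε := Int.sign_eq_one_or_eq_neg_one hv
      rw [sum_mul_matrix_of_ne_zero w _ hv, mass_side _ hε, at_origin, stationary, if_neg hv]
      field_simp
      ring

end GluedCompleteGraphs

end

open GluedCompleteGraphs in
/-- the glued-complete-graphs example on `{-m, …, m}`: the unique
invariant probability vector of `P` is `π_0 = 1/(m+1)`, `π_v = 1/(2m+2)` for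
`v ≠ 0`; any invariant probability vector `π̃` of `P̃` satisfies
`π̃_v - π_v = α sgn(v)/(m+1)` and `‖π̃ - π‖ = m α/(m+1)`. -/
theorem stmt14 (m : ℕ) (hm : 1 ≤ m)
    (P Pt : Matrix {x : ℤ // x ∈ Finset.Icc (-(m : ℤ)) (m : ℤ)}
      {x : ℤ // x ∈ Finset.Icc (-(m : ℤ)) (m : ℤ)} ℝ)
    (α : ℝ) (hα : 0 < α ∧ α < 1 / 2)
    (hP : ∀ u v, P u v =
      if u.val = 0 then (if v.val = 0 then 0 else 1 / (2 * (m : ℝ)))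
      else if u.val ≠ v.val ∧ 0 ≤ u.val * v.val then 1 / (m : ℝ) else 0)
    (hPt : ∀ u v, Pt u v =
      if u.val = 0 then
        (if v.val = 0 then 0 else (1 / 2 + α * (v.val.sign : ℝ)) / (m : ℝ))
      else P u v) :
    (InvariantProb P (fun v => if v.val = 0 then 1 / ((m : ℝ) + 1)
        else 1 / (2 * (m : ℝ) + 2)) ∧
      ∀ p, InvariantProb P p →
        p = fun v => if v.val = 0 then 1 / ((m : ℝ) + 1) else 1 / (2 * (m : ℝ) + 2)) ∧
    ∀ pit, InvariantProb Pt pit →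
      (∀ v, pit v - (if v.val = 0 then 1 / ((m : ℝ) + 1) else 1 / (2 * (m : ℝ) + 2))
          = α * (v.val.sign : ℝ) / ((m : ℝ) + 1)) ∧
      tvDist pit
        (fun v => if v.val = 0 then 1 / ((m : ℝ) + 1) else 1 / (2 * (m : ℝ) + 2))
        = (m : ℝ) * α / ((m : ℝ) + 1) := by
  have hm₀ : m ≠ 0 := by omega
  have hP_eq : P = matrix m fun _ => 1 / 2 := by
    ext u v
    rw [hP, matrix]
    split_ifs <;> ring
  have hPt_eq : Pt = matrix m fun s => 1 / 2 + α * s := by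
    ext u v
    rw [hPt, hP_eq, matrix, matrix]
    split_ifs <;> rfl
  have hπ : (fun v : Sites m => if v.val = 0 then 1 / ((m : ℝ) + 1) else 1 / (2 * (m : ℝ) + 2))
      = stationary m fun _ => 1 / 2 := by
    funext v
    rw [stationary]
    split_ifs <;> field_simp
  refine ⟨⟨hπ ▸ hP_eq ▸ invariantProb_stationary _ hm₀ (by norm_num) (by norm_num) (by norm_num),
    fun p hp => hπ ▸ eq_stationary_of_invariantProb _ hm₀ (by norm_num) (hP_eq ▸ hp)⟩,
    fun pit hpit => ?_⟩
  obtain rfl := eq_stationary_of_invariantProb _ hm₀ (by ring) (hPt_eq ▸ hpit)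
  have hdiff : ∀ v, stationary m (fun s => 1 / 2 + α * s) v
      - (if v.val = 0 then 1 / ((m : ℝ) + 1) else 1 / (2 * (m : ℝ) + 2))
      = α * (v.val.sign : ℝ) / ((m : ℝ) + 1) := by
    intro v
    rw [congrFun hπ v, stationary, stationary]
    split_ifs with hv
    · simp [hv]
    · ring
  refine ⟨hdiff, ?_⟩
  have habs : ∀ v : Sites m, |α * (v.val.sign : ℝ) / ((m : ℝ) + 1)|
      = α / (m + 1) * |(v.val.sign : ℝ)| := by
    intro v
    rw [abs_div, abs_mul, abs_of_pos hα.1, abs_of_pos (by positivity : (0 : ℝ) < m + 1)]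
    ring
  rw [tvDist, sum_congr rfl fun v _ => by rw [hdiff v, habs v], ← mul_sum, sum_abs_sign]
  field_simp
end

section
/- For a positive integer m, let 𝒱 := {−m, …, −1, 0, 1, …, m}, let P be the stochastic matrix with P_{uv} = 1/m if u ≠ v and u·v ≥ 0 with u ≠ 0, P_{uv} = 0 if u·v < 0 or u = v ≠ 0, and P_{0v} = 1/(2m) for all v ≠ 0; for 0 < α < 1/2 let P̃ coincide with P outside row 0 with P̃_{00} = 0 and P̃_{0v} = (1/2 + α·sgn(v))/m for v ≠ 0, and let π̃ be the invariant probability vector of P̃. Then for W = {0}: the entrance time of W for P is τ*_W = m, and the exit probability from W for P̃ is γ̃_W = 1. -/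
open scoped Classical BigOperators
open Finset
open Fin.NatCast

variable {V : Type*}

/-! From a vertex `u ≠ 0`, the walk `P` jumps uniformly to the `m` other vertices of the
complete graph formed by `0` and the side of `u`, so the time to hit `0` is geometric with
success probability `1 / m` and has mean `m`. Under `P̃` the walk leaves `0` at once because
`P̃₀₀ = 0`: only the exit at time `1` contributes, with weight the row sum `1`, so the averages
over `t` steps are `1 / t`, maximal at `t = 1`. -/

theorem entranceTime_eq_of_forall {tau : V → ℝ} {W : Finset V} {c : ℝ}
    (hW : ∃ u, u ∉ W) (h : ∀ u, u ∉ W → tau u = c) : entranceTime tau W = c := by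
  obtain ⟨u₀, hu₀⟩ := hW
  have hset : {x : ℝ | ∃ u, u ∉ W ∧ x = tau u} = {c} := by
    ext x
    constructor
    · rintro ⟨u, hu, rfl⟩
      exact h u hu
    · rintro rfl
      exact ⟨u₀, hu₀, (h u₀ hu₀).symm⟩
  rw [entranceTime, hset, csInf_singleton]

variable [Fintype V]

theorem phi_one (P : Matrix V V ℝ) (W : Finset V) (w : V) :
    phi P W w 1 = ∑ v ∈ Wᶜ, P w v := by
  refine Finset.sum_nbij' (fun ξ => ξ 1) (fun v => ![w, v]) ?_ ?_ ?_ ?_ ?_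
  · intro ξ hξ
    simp only [mem_filter, mem_univ, true_and] at hξ
    simpa using hξ.2.2
  · intro v hv
    simp only [mem_filter, mem_univ, true_and]
    refine ⟨rfl, fun l hl₁ hl₂ => by omega, ?_⟩
    simpa using hv
  · intro ξ hξ
    obtain ⟨-, h₀, -⟩ := Finset.mem_filter.mp hξ
    ext i
    fin_cases i
    · simpa using h₀.symm
    · simp
  · intro v _
    simp
  · intro ξ hξ
    simp only [mem_filter, mem_univ, true_and] at hξ
    simp [hξ.1]

/-- A path that stays in `{w}` for one step uses the loop at `w`. -/
theorem phi_singleton_eq_zero {P : Matrix V V ℝ} {w : V} (hw : P w w = 0) {k : ℕ}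
    (hk : 2 ≤ k) : phi P {w} w k = 0 := by
  refine Finset.sum_eq_zero fun ξ hξ => ?_
  simp only [mem_filter, mem_univ, true_and] at hξ
  obtain ⟨h₀, hmid, -⟩ := hξ
  have h₁ : ξ ((1 : ℕ) : Fin (k + 1)) = w := Finset.mem_singleton.mp (hmid 1 one_pos (by omega))
  refine Finset.prod_eq_zero (Finset.mem_range.mpr (by omega : 0 < k)) ?_
  simp only [Nat.cast_zero, Nat.cast_one, zero_add] at h₁ ⊢
  rw [h₀, h₁, hw]

theorem sum_phi_singleton {P : Matrix V V ℝ} {w : V} (hw : P w w = 0) {t : ℕ} (ht : 1 ≤ t) :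
    ∑ k ∈ Icc 1 t, phi P {w} w k = ∑ v ∈ {w}ᶜ, P w v := by
  rw [Finset.sum_eq_single_of_mem 1 (Finset.mem_Icc.mpr ⟨le_rfl, ht⟩), phi_one]
  intro k hk hk₁
  exact phi_singleton_eq_zero hw (by rw [Finset.mem_Icc] at hk; omega)

theorem exitProbAux_of_sum_phi_eq_one {P : Matrix V V ℝ} {p : V → ℝ} {W : Finset V} {t : ℕ}
    (h : ∀ w ∈ W, ∑ k ∈ Icc 1 t, phi P W w k = 1) :
    exitProbAux P p W t = if (W.filter fun w => 0 < p w).Nonempty then 1 / (t : ℝ) else 1 := by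
  rw [exitProbAux]
  split_ifs with hne
  · rw [Finset.inf'_congr hne rfl fun w hw => by rw [h w (Finset.mem_filter.mp hw).1, mul_one],
      Finset.inf'_const]
  · rfl

theorem exitProb_eq_one_of_sum_phi_eq_one {P : Matrix V V ℝ} {p : V → ℝ} {W : Finset V}
    (h : ∀ w ∈ W, ∀ t, 1 ≤ t → ∑ k ∈ Icc 1 t, phi P W w k = 1) : exitProb P p W = 1 := by
  have hle : ∀ t, 1 ≤ t → exitProbAux P p W t ≤ 1 := fun t ht => by
    rw [exitProbAux_of_sum_phi_eq_one fun w hw => h w hw t ht]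
    split_ifs
    · exact div_le_one_of_le₀ (by exact_mod_cast ht) (Nat.cast_nonneg t)
    · rfl
  have hone : exitProbAux P p W 1 = 1 := by
    rw [exitProbAux_of_sum_phi_eq_one fun w hw => h w hw 1 le_rfl]
    simp
  rw [exitProb]
  refine le_antisymm (csSup_le ⟨1, 1, le_rfl, hone.symm⟩ ?_)
    (le_csSup ⟨1, ?_⟩ ⟨1, le_rfl, hone.symm⟩)
  all_goals
    rintro x ⟨t, ht, rfl⟩
    exact hle t ht

/-- This is the hitting time of a vertex `0 ∉ S` for the walk on the complete graph on
`S ∪ {0}`: every step hits `0` with probability `1 / #S`. -/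
theorem eq_card_of_forall_eq_one_add_sum_erase {ι : Type*} [DecidableEq ι] {S : Finset ι}
    {τ : ι → ℝ} (h : ∀ u ∈ S, τ u = 1 + 1 / #S * ∑ v ∈ S.erase u, τ v) :
    ∀ u ∈ S, τ u = (#S : ℝ) := by
  intro u hu
  set n : ℝ := (#S : ℝ)
  have hn : 0 < n := by simpa [n] using Finset.card_pos.mpr ⟨u, hu⟩
  set T := ∑ v ∈ S, τ v
  have hrow : ∀ v ∈ S, τ v * (n + 1) = n + T := fun v hv => by
    have := h v hv
    rw [Finset.sum_erase_eq_sub hv] at this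
    field_simp at this
    linarith
  have hT : T * (n + 1) = n * (n + T) := by
    rw [Finset.sum_mul, Finset.sum_congr rfl hrow, Finset.sum_const, nsmul_eq_mul]
  have hTn : T = n * n := by nlinarith
  have := hrow u hu
  rw [hTn] at this
  nlinarith

theorem Int.mul_nonneg_iff_of_mul_self_eq_one {s a b : ℤ} (hs : s * s = 1) (ha : 0 < s * a)
    (hb : b ≠ 0) : 0 ≤ a * b ↔ 0 < s * b := by
  have hs₀ : s ≠ 0 := by rintro rfl; simp at hs
  have hab : a * b = s * a * (s * b) := by linear_combination (-(a * b)) * hs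
  rw [hab, mul_nonneg_iff_of_pos_left ha, (mul_ne_zero hs₀ hb).symm.le_iff_lt]

abbrev SymIcc (m : ℕ) := {x : ℤ // x ∈ Finset.Icc (-(m : ℤ)) (m : ℤ)}

noncomputable def gluedMatrix (m : ℕ) : Matrix (SymIcc m) (SymIcc m) ℝ := fun u v =>
  if u.val = 0 then (if v.val = 0 then 0 else 1 / (2 * (m : ℝ)))
  else if u.val ≠ v.val ∧ 0 ≤ u.val * v.val then 1 / (m : ℝ) else 0

namespace SymIcc

/-- The vertices on the side `s = 1` (positive) or `s = -1` (negative) of `0`. -/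
noncomputable def side (m : ℕ) (s : ℤ) : Finset (SymIcc m) := univ.filter fun u => 0 < s * u.val

variable {m : ℕ} {s : ℤ}

theorem card_side (hs : s = 1 ∨ s = -1) : #(side m s) = m := by
  have hcard : #(side m s) = #(Icc (1 : ℤ) m) := by
    refine Finset.card_bij (fun u _ => s * u.val) ?_ ?_ ?_
    · intro u hu
      have := (Finset.mem_filter.mp hu).2
      have := Finset.mem_Icc.mp u.2
      rcases hs with rfl | rfl <;> simp only [Finset.mem_Icc] <;> omega
    · intro u _ v _ huv
      rcases hs with rfl | rfl <;> exact Subtype.ext (by omega)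
    · intro x hx
      have := Finset.mem_Icc.mp hx
      have hmem : s * x ∈ Icc (-(m : ℤ)) m := by
        rcases hs with rfl | rfl <;> simp only [Finset.mem_Icc] <;> omega
      have hss : s * (s * x) = x := by rcases hs with rfl | rfl <;> ring
      exact ⟨⟨s * x, hmem⟩, Finset.mem_filter.mpr ⟨mem_univ _, show 0 < s * (s * x) by omega⟩, hss⟩
  rw [hcard, Int.card_Icc]
  omega

theorem sign_of_mem_side (hs : s = 1 ∨ s = -1) {v : SymIcc m} (hv : v ∈ side m s) :
    v.val.sign = s := by
  have := (Finset.mem_filter.mp hv).2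
  rcases hs with rfl | rfl
  · exact Int.sign_eq_one_of_pos (by omega)
  · exact Int.sign_eq_neg_one_of_neg (by omega)

theorem mem_side_sign {u : SymIcc m} (hu : u.val ≠ 0) : u ∈ side m u.val.sign := by
  simpa [side, Int.sign_mul_self] using hu

theorem side_one_union_side_neg_one :
    side m 1 ∪ side m (-1) = univ.filter fun v : SymIcc m => v.val ≠ 0 := by
  ext v
  simp only [side, Finset.mem_union, Finset.mem_filter, Finset.mem_univ, true_and]
  omega

theorem disjoint_side_one_side_neg_one : Disjoint (side m 1) (side m (-1)) := by
  rw [Finset.disjoint_left]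
  intro v h₁ h₂
  have := (Finset.mem_filter.mp h₁).2
  have := (Finset.mem_filter.mp h₂).2
  omega

end SymIcc

open SymIcc

/-- Since `τ` vanishes at `0`, the step to `0` does not contribute to the sum. -/
theorem sum_gluedMatrix_mul {m : ℕ} {s : ℤ} (hs : s * s = 1) {τ : SymIcc m → ℝ}
    (hτ₀ : ∀ v : SymIcc m, v.val = 0 → τ v = 0) {u : SymIcc m} (hu : u ∈ side m s) :
    ∑ v, gluedMatrix m u v * τ v = 1 / m * ∑ v ∈ (side m s).erase u, τ v := by
  have hsu : 0 < s * u.val := (Finset.mem_filter.mp hu).2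
  have hu₀ : u.val ≠ 0 := by rintro h; simp [h] at hsu
  have hterm : ∀ v, gluedMatrix m u v * τ v =
      if v ∈ (side m s).erase u then 1 / m * τ v else 0 := by
    intro v
    by_cases hv : v.val = 0
    · simp [hτ₀ v hv, side, hv]
    · have hne : u.val ≠ v.val ↔ v ≠ u := by rw [Ne, Ne, Subtype.ext_iff, eq_comm]
      simp only [gluedMatrix, if_neg hu₀, hne,
        Int.mul_nonneg_iff_of_mul_self_eq_one hs hsu hv, Finset.mem_erase, side,
        Finset.mem_filter, Finset.mem_univ, true_and]
      split_ifs <;> simp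
  rw [Finset.sum_congr rfl fun v _ => hterm v, Finset.sum_ite_mem, Finset.univ_inter,
    Finset.mul_sum]

theorem gluedMatrix_hittingTime_eq {m : ℕ} {τ : SymIcc m → ℝ}
    (hτ₀ : ∀ v : SymIcc m, v.val = 0 → τ v = 0)
    (hτ : ∀ u : SymIcc m, u.val ≠ 0 → τ u = 1 + ∑ v, gluedMatrix m u v * τ v)
    {u : SymIcc m} (hu : u.val ≠ 0) : τ u = m := by
  set s := u.val.sign
  have hs : s = 1 ∨ s = -1 := by
    rcases lt_or_gt_of_ne hu with h | h
    · exact Or.inr (Int.sign_eq_neg_one_of_neg h)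
    · exact Or.inl (Int.sign_eq_one_of_pos h)
  have hss : s * s = 1 := by rcases hs with h | h <;> rw [h] <;> rfl
  have hrow : ∀ v ∈ side m s, τ v = 1 + 1 / #(side m s) * ∑ w ∈ (side m s).erase v, τ w := by
    intro v hv
    have hv₀ : v.val ≠ 0 := by
      rintro h; simp [side, h] at hv
    rw [hτ v hv₀, sum_gluedMatrix_mul hss hτ₀ hv, card_side hs]
  rw [eq_card_of_forall_eq_one_add_sum_erase hrow u (mem_side_sign hu), card_side hs]

theorem sum_tiltedRow_eq_one {m : ℕ} (hm : 1 ≤ m) (α : ℝ) :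
    ∑ v ∈ univ.filter (fun v : SymIcc m => v.val ≠ 0),
      (1 / 2 + α * (v.val.sign : ℝ)) / (m : ℝ) = 1 := by
  have hside : ∀ s : ℤ, (s = 1 ∨ s = -1) → ∑ v ∈ side m s,
      (1 / 2 + α * (v.val.sign : ℝ)) / (m : ℝ) = m * ((1 / 2 + α * s) / m) := fun s hs => by
    rw [Finset.sum_congr rfl fun v hv => by rw [sign_of_mem_side hs hv], Finset.sum_const,
      card_side hs, nsmul_eq_mul]
  have hm₀ : (m : ℝ) ≠ 0 := by positivity
  rw [← side_one_union_side_neg_one, Finset.sum_union disjoint_side_one_side_neg_one,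
    hside 1 (Or.inl rfl), hside (-1) (Or.inr rfl)]
  field_simp
  push_cast
  ring

theorem stmt15_general (m : ℕ) (hm : 1 ≤ m)
    (P Pt : Matrix {x : ℤ // x ∈ Finset.Icc (-(m : ℤ)) (m : ℤ)}
      {x : ℤ // x ∈ Finset.Icc (-(m : ℤ)) (m : ℤ)} ℝ)
    (α : ℝ)
    (hP : ∀ u v, P u v =
      if u.val = 0 then (if v.val = 0 then 0 else 1 / (2 * (m : ℝ)))
      else if u.val ≠ v.val ∧ 0 ≤ u.val * v.val then 1 / (m : ℝ) else 0)
    (hPt : ∀ u v, Pt u v =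
      if u.val = 0 then
        (if v.val = 0 then 0 else (1 / 2 + α * (v.val.sign : ℝ)) / (m : ℝ))
      else P u v)
    (z : {x : ℤ // x ∈ Finset.Icc (-(m : ℤ)) (m : ℤ)}) (hz : z.val = 0)
    (pit : {x : ℤ // x ∈ Finset.Icc (-(m : ℤ)) (m : ℤ)} → ℝ)
    (tau : {x : ℤ // x ∈ Finset.Icc (-(m : ℤ)) (m : ℤ)} → ℝ)
    (htau0 : tau z = 0)
    (htau1 : ∀ u, u ≠ z → tau u = 1 + ∑ v, P u v * tau v) :
    entranceTime tau {z} = (m : ℝ) ∧ exitProb Pt pit {z} = 1 := by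
  have hzero : ∀ v : SymIcc m, v.val = 0 ↔ v = z := fun v => by rw [Subtype.ext_iff, hz]
  have hPglued : P = gluedMatrix m := Matrix.ext hP
  subst hPglued
  have htau : ∀ u : SymIcc m, u.val ≠ 0 → tau u = m :=
    fun _ => gluedMatrix_hittingTime_eq (fun v hv => (hzero v).mp hv ▸ htau0)
      fun u hu => htau1 u (mt (hzero u).mpr hu)
  have hPtz : Pt z z = 0 := by simp [hPt, hz]
  refine ⟨entranceTime_eq_of_forall ⟨⟨1, Finset.mem_Icc.mpr ⟨by omega, by omega⟩⟩, ?_⟩ ?_,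
    exitProb_eq_one_of_sum_phi_eq_one ?_⟩
  · simp [← hzero]
  · intro u hu
    exact htau u (by simpa [hzero] using hu)
  · intro w hw t ht
    obtain rfl := Finset.mem_singleton.mp hw
    rw [sum_phi_singleton hPtz ht, ← sum_tiltedRow_eq_one hm α]
    refine Finset.sum_congr (by ext v; simp [hzero]) fun v hv => ?_
    rw [hPt, if_pos hz, if_neg (Finset.mem_filter.mp hv).2]

/-- in the glued-complete-graphs example with `W = {0}`: the entrance
time of `W` for `P` is `m` and the exit probability from `W` for `P̃` is `1`. -/
theorem stmt15 (m : ℕ) (hm : 1 ≤ m)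
    (P Pt : Matrix {x : ℤ // x ∈ Finset.Icc (-(m : ℤ)) (m : ℤ)}
      {x : ℤ // x ∈ Finset.Icc (-(m : ℤ)) (m : ℤ)} ℝ)
    (α : ℝ) (hα : 0 < α ∧ α < 1 / 2)
    (hP : ∀ u v, P u v =
      if u.val = 0 then (if v.val = 0 then 0 else 1 / (2 * (m : ℝ)))
      else if u.val ≠ v.val ∧ 0 ≤ u.val * v.val then 1 / (m : ℝ) else 0)
    (hPt : ∀ u v, Pt u v =
      if u.val = 0 then
        (if v.val = 0 then 0 else (1 / 2 + α * (v.val.sign : ℝ)) / (m : ℝ))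
      else P u v)
    (z : {x : ℤ // x ∈ Finset.Icc (-(m : ℤ)) (m : ℤ)}) (hz : z.val = 0)
    (pit : {x : ℤ // x ∈ Finset.Icc (-(m : ℤ)) (m : ℤ)} → ℝ)
    (hpit : InvariantProb Pt pit)
    (tau : {x : ℤ // x ∈ Finset.Icc (-(m : ℤ)) (m : ℤ)} → ℝ)
    (htau0 : tau z = 0)
    (htau1 : ∀ u, u ≠ z → tau u = 1 + ∑ v, P u v * tau v) :
    entranceTime tau {z} = (m : ℝ) ∧ exitProb Pt pit {z} = 1 :=
  stmt15_general m hm P Pt α hP hPt z hz pit tau htau0 htau1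
end
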